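/- Let g ∈ {1,…,m} be an edge with destination vertex i = dst(g), let k₂ > 0, let ω^u ∈ ℝⁿ, and let z ∈ ℝⁿ. Let q = (𝟙zᵀ − I)ω^u. Suppose θ̃ : ℝ → ℝⁿ is differentiable on [t₁, t₂] with θ̃'(t) = q + ω^u + k₂·sign(β̃_g(t))·e_i for all t ∈ [t₁, t₂], where β̃(t) = Bᵀθ̃(t). Set h = |β̃_g(t₁)|/k₂ and assume t₂ ≥ t₁ + h. Then β̃(t₂) = (I + BᵀDE^g)β̃(t₁). -/

import Mathlib

open Matrix Set

lemma sign_fact (k₂ x L s : ℝ) (hk : 0 < k₂)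
    (hs : s = -1 ∨ (s = 0 ∧ L = 0) ∨ s = 1) (hL : 0 ≤ s * L) :
    (x - L) * (-(k₂ * Real.sign x) - -(k₂ * s)) ≤ 0 := by
  rcases lt_trichotomy x 0 with hx | hx | hx
  · rw [Real.sign_of_neg hx]
    rcases hs with h1 | ⟨h1, h2⟩ | h1 <;> subst h1 <;> nlinarith
  · subst hx; rw [Real.sign_zero]
    rcases hs with h1 | ⟨h1, h2⟩ | h1 <;> subst h1 <;> nlinarith
  · rw [Real.sign_of_pos hx]
    rcases hs with h1 | ⟨h1, h2⟩ | h1 <;> subst h1 <;> nlinarith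

lemma key_ode (k₂ : ℝ) (hk : 0 < k₂) (a b : ℝ)
    (φ : ℝ → ℝ)
    (hφ : ∀ t ∈ Icc a b, HasDerivWithinAt φ (-(k₂ * Real.sign (φ t))) (Icc a b) t)
    (s : ℝ) (hs : s = Real.sign (φ a))
    (hpos : ∀ t ∈ Icc a b, 0 ≤ s * (φ a - k₂ * s * (t - a))) :
    ∀ t ∈ Icc a b, φ t = φ a - k₂ * s * (t - a) := by
  intro t htm
  have hab : a ≤ b := le_trans htm.1 htm.2
  set ℓ : ℝ → ℝ := fun t => φ a - k₂ * s * (t - a) with hℓ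
  set w : ℝ → ℝ := fun t => (φ t - ℓ t) ^ 2 with hw
  have hs3 : ∀ τ ∈ Icc a b, s = -1 ∨ (s = 0 ∧ ℓ τ = 0) ∨ s = 1 := by
    intro τ hτ
    rcases lt_trichotomy (φ a) 0 with hx | hx | hx
    · left; rw [hs, Real.sign_of_neg hx]
    · right; left
      constructor
      · rw [hs, hx, Real.sign_zero]
      · have : s = 0 := by rw [hs, hx, Real.sign_zero]
        simp [hℓ, this, hx]
    · right; right; rw [hs, Real.sign_of_pos hx]
  have hwd : ∀ τ ∈ Icc a b, HasDerivWithinAt w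
      (2 * (φ τ - ℓ τ) * (-(k₂ * Real.sign (φ τ)) - -(k₂ * s))) (Icc a b) τ := by
    intro τ hτ
    have hld : HasDerivWithinAt ℓ (-(k₂ * s)) (Icc a b) τ := by
      have : HasDerivWithinAt (fun t : ℝ => φ a - k₂ * s * (t - a))
          (0 - k₂ * s * (1 - 0)) (Icc a b) τ :=
        (hasDerivWithinAt_const _ _ _).sub
          (((hasDerivWithinAt_id _ _).sub (hasDerivWithinAt_const _ _ _)).const_mul _)
      simpa using this
    have h2 := ((hφ τ hτ).fun_sub hld).fun_pow 2
    refine h2.congr_deriv ?_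
    norm_num
  have hanti : AntitoneOn w (Icc a b) := by
    apply antitoneOn_of_deriv_nonpos (convex_Icc a b)
    · exact fun τ hτ => (hwd τ hτ).continuousWithinAt
    · intro τ hτ
      rw [interior_Icc] at hτ
      exact (((hwd τ (Ioo_subset_Icc_self hτ)).hasDerivAt
        (Icc_mem_nhds hτ.1 hτ.2)).differentiableAt).differentiableWithinAt
    · intro τ hτ
      rw [interior_Icc] at hτ
      rw [((hwd τ (Ioo_subset_Icc_self hτ)).hasDerivAt (Icc_mem_nhds hτ.1 hτ.2)).deriv]
      have := sign_fact k₂ (φ τ) (ℓ τ) s hk (hs3 τ (Ioo_subset_Icc_self hτ))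
        (hpos τ (Ioo_subset_Icc_self hτ))
      nlinarith
  have h0 : w a = 0 := by simp [hw, hℓ]
  have hle : w t ≤ 0 := h0 ▸ hanti (left_mem_Icc.mpr hab) htm htm.1
  have hge := sq_nonneg (φ t - ℓ t)
  have h00 : (φ t - ℓ t) ^ 2 = 0 := le_antisymm hle hge
  have := pow_eq_zero_iff (n := 2) (by norm_num) |>.mp h00
  have hft : φ t = ℓ t := sub_eq_zero.mp this
  simpa [hℓ] using hft

/-- effect of one pulsed centering step on the buffer occupancies. -/
theorem stmt10 {n m : ℕ}
    (src dst : Fin m → Fin n) (hloop : ∀ e, src e ≠ dst e)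
    (S D B : Matrix (Fin n) (Fin m) ℝ)
    (hS : S = Matrix.of fun i' e => if src e = i' then (1 : ℝ) else 0)
    (hD : D = Matrix.of fun i' e => if dst e = i' then (1 : ℝ) else 0)
    (hB : B = S - D)
    (g : Fin m) (i : Fin n) (hi : i = dst g)
    (k₂ : ℝ) (hk : 0 < k₂)
    (ωu z : Fin n → ℝ)
    (q : Fin n → ℝ)
    (hq : q = (vecMulVec (fun _ : Fin n => (1 : ℝ)) z - 1).mulVec ωu)
    (t₁ t₂ : ℝ)
    (θt : ℝ → Fin n → ℝ)
    (βt : ℝ → Fin m → ℝ)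
    (hβt : ∀ t : ℝ, βt t = Bᵀ.mulVec (θt t))
    (hθt : ∀ t ∈ Icc t₁ t₂,
      HasDerivWithinAt θt
        (q + ωu + (k₂ * Real.sign (βt t g)) • (Pi.single i (1 : ℝ) : Fin n → ℝ))
        (Icc t₁ t₂) t)
    (h : ℝ) (hh : h = |βt t₁ g| / k₂)
    (ht : t₁ + h ≤ t₂) :
    βt t₂ = (1 + Bᵀ * D * single g g (1 : ℝ)).mulVec (βt t₁) := by
  have hh0 : 0 ≤ h := by rw [hh]; positivity
  have ht12 : t₁ ≤ t₂ := by linarith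
  have hkh : k₂ * h = |βt t₁ g| := by rw [hh]; field_simp
  -- column sums of B vanish
  have hBsum : ∀ j : Fin m, ∑ k, B k j = 0 := by
    intro j
    rw [hB, hS, hD]
    simp [Matrix.sub_apply, Finset.sum_sub_distrib]
  -- the key incidence entry
  have hBig : B i g = -1 := by
    rw [hB, hS, hD]
    simp [Matrix.sub_apply, hi, (hloop g)]
  -- q + ωu is a constant vector
  have hqω : ∀ k, q k + ωu k = ∑ x, z x * ωu x := by
    intro k
    rw [hq]
    simp [Matrix.mulVec, dotProduct, Matrix.vecMulVec_apply, Matrix.sub_apply,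
      Matrix.one_apply, sub_mul, Finset.sum_sub_distrib]
  -- component derivatives of β
  have hβd : ∀ (j : Fin m), ∀ t ∈ Icc t₁ t₂, HasDerivWithinAt (fun τ => βt τ j)
      (k₂ * Real.sign (βt t g) * B i j) (Icc t₁ t₂) t := by
    intro j t htm
    have hθ := hθt t htm
    have hcomp : ∀ k : Fin n, HasDerivWithinAt (fun τ => θt τ k)
        ((q + ωu + (k₂ * Real.sign (βt t g)) • (Pi.single i (1 : ℝ) : Fin n → ℝ)) k)
        (Icc t₁ t₂) t := fun k =>
      (ContinuousLinearMap.proj (R := ℝ) (φ := fun _ : Fin n => ℝ)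
        k).hasFDerivAt.comp_hasDerivWithinAt t hθ
    have hsum : HasDerivWithinAt (fun τ => ∑ k, B k j * θt τ k)
        (∑ k, B k j * ((q + ωu + (k₂ * Real.sign (βt t g)) •
          (Pi.single i (1 : ℝ) : Fin n → ℝ)) k)) (Icc t₁ t₂) t :=
      HasDerivWithinAt.fun_sum fun k _ => (hcomp k).const_mul _
    have heq : (fun τ => βt τ j) = (fun τ => ∑ k, B k j * θt τ k) := by
      funext τ
      rw [hβt τ]
      simp [Matrix.mulVec, dotProduct, Matrix.transpose_apply]
    rw [heq]
    convert hsum using 1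
    have hval : ∀ k : Fin n, B k j * ((q + ωu + (k₂ * Real.sign (βt t g)) •
        (Pi.single i (1 : ℝ) : Fin n → ℝ)) k)
        = B k j * (∑ x, z x * ωu x) + (k₂ * Real.sign (βt t g)) *
          (if k = i then B k j else 0) := by
      intro k
      simp only [Pi.add_apply, Pi.smul_apply, smul_eq_mul, Pi.single_apply]
      rw [show q k + ωu k = ∑ x, z x * ωu x from hqω k]
      split <;> ring
    rw [Finset.sum_congr rfl (fun k _ => hval k), Finset.sum_add_distrib,
      ← Finset.sum_mul, hBsum j, zero_mul, zero_add, ← Finset.mul_sum,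
      Finset.sum_ite_eq' Finset.univ i (fun k => B k j)]
    simp
  -- the scalar ODE for the g-th component
  have hφ : ∀ t ∈ Icc t₁ t₂, HasDerivWithinAt (fun τ => βt τ g)
      (-(k₂ * Real.sign (βt t g))) (Icc t₁ t₂) t := by
    intro t htm
    have := hβd g t htm
    rw [hBig, mul_neg_one] at this
    exact this
  -- phase 1 : [t₁, t₁+h]
  have hsub1 : Icc t₁ (t₁ + h) ⊆ Icc t₁ t₂ := Icc_subset_Icc_right (by linarith)
  have phase1 := key_ode k₂ hk t₁ (t₁ + h) (fun τ => βt τ g)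
    (fun t htm' => (hφ t (hsub1 htm')).mono hsub1) (Real.sign (βt t₁ g)) rfl
    (by
      intro t htm'
      have h1 : t - t₁ ≤ h := by linarith [htm'.2]
      have h2 : t₁ ≤ t := htm'.1
      rcases lt_trichotomy (βt t₁ g) 0 with hx | hx | hx
      · rw [Real.sign_of_neg hx]
        rw [abs_of_neg hx] at hkh
        nlinarith
      · rw [hx, Real.sign_zero]; simp
      · rw [Real.sign_of_pos hx]
        rw [abs_of_pos hx] at hkh
        nlinarith)
  have hmid : βt (t₁ + h) g = 0 := by
    have := phase1 (t₁ + h) (right_mem_Icc.mpr (by linarith))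
    rcases lt_trichotomy (βt t₁ g) 0 with hx | hx | hx
    · rw [Real.sign_of_neg hx] at this
      rw [abs_of_neg hx] at hkh
      rw [this]; ring_nf; linarith
    · rw [hx, Real.sign_zero] at this
      rw [this]; ring
    · rw [Real.sign_of_pos hx] at this
      rw [abs_of_pos hx] at hkh
      rw [this]; ring_nf; linarith
  -- phase 2 : [t₁+h, t₂]
  have hsub2 : Icc (t₁ + h) t₂ ⊆ Icc t₁ t₂ := Icc_subset_Icc_left (by linarith)
  have phase2 := key_ode k₂ hk (t₁ + h) t₂ (fun τ => βt τ g)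
    (fun t htm' => (hφ t (hsub2 htm')).mono hsub2) 0
    (by simp [hmid]) (by intro t _; simp)
  have hfin : βt t₂ g = 0 := by
    have := phase2 t₂ (right_mem_Icc.mpr ht)
    simp only [hmid] at this
    simpa using this
  -- constancy of β_j + B_{i,j} β_g
  have hconst : ∀ j : Fin m, βt t₂ j + B i j * βt t₂ g = βt t₁ j + B i j * βt t₁ g := by
    intro j
    have hfd : ∀ t ∈ Icc t₁ t₂, HasDerivWithinAt
        (fun τ => βt τ j + B i j * βt τ g) 0 (Icc t₁ t₂) t := by
      intro t htm
      have h1 := (hβd j t htm).fun_add ((hβd g t htm).const_mul (B i j))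
      rw [hBig] at h1
      refine h1.congr_deriv ?_
      ring
    have hcont : ContinuousOn (fun τ => βt τ j + B i j * βt τ g) (Icc t₁ t₂) :=
      fun t htm => (hfd t htm).continuousWithinAt
    have hdiff : ∀ t ∈ interior (Icc t₁ t₂),
        HasDerivAt (fun τ => βt τ j + B i j * βt τ g) 0 t := by
      intro t htm
      rw [interior_Icc] at htm
      exact (hfd t (Ioo_subset_Icc_self htm)).hasDerivAt (Icc_mem_nhds htm.1 htm.2)
    have hanti : AntitoneOn (fun τ => βt τ j + B i j * βt τ g) (Icc t₁ t₂) :=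
      antitoneOn_of_deriv_nonpos (convex_Icc _ _) hcont
        (fun t htm => (hdiff t htm).differentiableAt.differentiableWithinAt)
        (fun t htm => le_of_eq ((hdiff t htm).deriv))
    have hmono : MonotoneOn (fun τ => βt τ j + B i j * βt τ g) (Icc t₁ t₂) :=
      monotoneOn_of_deriv_nonneg (convex_Icc _ _) hcont
        (fun t htm => (hdiff t htm).differentiableAt.differentiableWithinAt)
        (fun t htm => ge_of_eq ((hdiff t htm).deriv))
    exact le_antisymm (hanti (left_mem_Icc.mpr ht12) (right_mem_Icc.mpr ht12) ht12)
      (hmono (left_mem_Icc.mpr ht12) (right_mem_Icc.mpr ht12) ht12)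
  funext j
  have hRHS : (1 + Bᵀ * D * single g g (1 : ℝ)).mulVec (βt t₁) j
      = βt t₁ j + B i j * βt t₁ g := by
    rw [Matrix.add_mulVec, Matrix.one_mulVec]
    simp [Matrix.mulVec, dotProduct, Matrix.mul_apply, Matrix.single,
      Matrix.transpose_apply, hD, hi, Finset.sum_ite_eq, Finset.sum_ite_eq',
      ite_and, mul_ite, mul_zero, mul_one]
  have hj := hconst j
  rw [hfin, mul_zero, add_zero] at hj
  rw [hRHS]
  exact hj
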